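/- Let 𝔽_q be a finite field with q elements, n ≥ m ≥ 1, E a finite nonempty set, P^{AE} a sub-distribution on 𝔽_q^n × E, and Q a normalized distribution on E with Q(e) > 0 for all e. Let (f_x : 𝔽_q^n → 𝔽_q^m)_{x∈X} be an ensemble of surjective linear maps over a finite probability space (X,w) that is ε-almost dual universal₂: Pr_X[ y ∈ (ker f_X)^⊥ ] ≤ ε·q^{m−n} for every nonzero y. Set M := q^m. Then E_X [ d₁'(f_X(A)|E|P^{AE}) ] ≤ √ε · M^{1/2} · e^{−H₂(A|E|P^{AE}‖Q)/2}. Moreover, if P^{AE} is normalized with P^E(e) > 0 for all e, then E_X [ I'(f_X(A)|E|P^{AE}) ] ≤ log( 1 + ε·M·e^{−H₂(A|E|P^{AE}‖P^E)} ) ≤ ε·M·e^{−H₂(A|E|P^{AE}‖P^E)}. -/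

import Mathlib

/-!
Everything rests on the collision bound
`E_X Σ_b P^{f_X(A)E}(b,e)² ≤ P^E(e)²/q^m + ε Σ_a P^{AE}(a,e)²`.
Instead of Fourier analysis on `𝔽_q^n` it uses the character-free orthogonality relation
`Σ_{y ∈ K^⊥} (q·[v·y = 0] − 1) = (q − 1)·|K^⊥|·[v ∈ K]`. Taking `v = a − a'` and summing against
`P(a,e)·P(a',e)` writes `(q − 1)·|K^⊥|` times the collision mass of `A mod K` as the sum over
`y ∈ K^⊥` of the biases `q·Σ_c P(y·A = c, e)² − P^E(e)²`, which are nonnegative by Cauchy–Schwarz.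
For `K = ker f_x` the term `y = 0` is the uniform part and dual universality bounds the weight of
every other `y` by `ε·q^{m−n}`; for `K = 0` the biases add up to
`(q − 1)·(q^n Σ_a P(a,e)² − P^E(e)²)`.

The `d₁'` bound follows by Cauchy–Schwarz weighted by `Q` and concavity of `√`, the `I'` bound by
comparing `log` with its tangent line at `1 + ε·M·e^{−H₂}`.
-/

open scoped BigOperators

open Classical in
/-- Probability of the event `p` with respect to the weight `w` on a finite index set. -/
noncomputable def prOf {X : Type*} [Fintype X] (w : X → ℝ) (p : X → Prop) : ℝ :=
  ∑ x, if p x then w x else 0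

open Classical in
/-- Pushforward `P^{f(A),E}(b,e) = Σ_{a : f(a)=b} P^{AE}(a,e)`. -/
noncomputable def push {A B E : Type*} [Fintype A] (f : A → B) (P : A × E → ℝ)
    (b : B) (e : E) : ℝ :=
  ∑ a, if f a = b then P (a, e) else 0

open Finset Classical

section Pushforward

variable {A B E : Type*} [Fintype A]

lemma push_nonneg (f : A → B) {P : A × E → ℝ} (hP : ∀ x, 0 ≤ P x) (b : B) (e : E) :
    0 ≤ push f P b e :=
  sum_nonneg fun a _ => by split_ifs <;> simp [hP]

variable [Fintype B]

noncomputable def collision (f : A → B) (P : A × E → ℝ) (e : E) : ℝ :=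
  ∑ b, push f P b e ^ 2

lemma sum_push (f : A → B) (P : A × E → ℝ) (e : E) : ∑ b, push f P b e = ∑ a, P (a, e) := by
  simp only [push]
  rw [sum_comm]
  simp

lemma collision_eq (f : A → B) (P : A × E → ℝ) (e : E) :
    collision f P e = ∑ a, ∑ a', if f a = f a' then P (a, e) * P (a', e) else 0 := by
  simp only [collision, push, sq, sum_mul_sum, ite_zero_mul_ite_zero]
  rw [sum_comm]
  refine sum_congr rfl fun a _ => ?_
  rw [sum_comm]
  refine sum_congr rfl fun a' _ => ?_
  by_cases h : f a = f a'
  · simp [h]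
  · rw [if_neg h]
    refine sum_eq_zero fun b _ => if_neg ?_
    rintro ⟨rfl, hb⟩
    exact h hb.symm

lemma sq_sum_le_card_mul_collision (f : A → B) (P : A × E → ℝ) (e : E) :
    (∑ a, P (a, e)) ^ 2 ≤ Fintype.card B * collision f P e := by
  rw [← sum_push f]
  exact sq_sum_le_card_mul_sum_sq

lemma sum_sq_push_sub_mean (f : A → B) (P : A × E → ℝ) (e : E) :
    ∑ b, (push f P b e - (∑ a, P (a, e)) / Fintype.card B) ^ 2 =
      collision f P e - (∑ a, P (a, e)) ^ 2 / Fintype.card B := by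
  rcases isEmpty_or_nonempty B with _ | _
  · simp [collision]
  have hB : (Fintype.card B : ℝ) ≠ 0 := by positivity
  simp only [sub_sq, sum_add_distrib, sum_sub_distrib, ← sum_mul, ← mul_sum, sum_const,
    card_univ, nsmul_eq_mul, sum_push, collision]
  field_simp
  ring

end Pushforward

section DualCode

variable {F : Type*} [Field F] {n : ℕ}

def dotOrth (K : Submodule F (Fin n → F)) : Submodule F (Fin n → F) :=
  K.dualAnnihilator.comap (dotProductEquiv F (Fin n)).toLinearMap

lemma mem_dotOrth {K : Submodule F (Fin n → F)} {y : Fin n → F} :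
    y ∈ dotOrth K ↔ ∀ v ∈ K, v ⬝ᵥ y = 0 := by
  simp [dotOrth, Submodule.mem_dualAnnihilator, dotProduct_comm]

lemma mem_dotOrth_sup_span_singleton {K : Submodule F (Fin n → F)} {v y : Fin n → F} :
    y ∈ dotOrth (K ⊔ F ∙ v) ↔ y ∈ dotOrth K ∧ v ⬝ᵥ y = 0 := by
  simp only [dotOrth, Submodule.dualAnnihilator_sup_eq, Submodule.comap_inf,
    Submodule.mem_inf]
  refine and_congr_right fun _ => ?_
  simp only [Submodule.mem_comap, Submodule.mem_dualAnnihilator, Submodule.mem_span_singleton]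
  exact ⟨fun h => by simpa [dotProduct_comm] using h v ⟨1, one_smul F v⟩,
    fun h _ ⟨a, ha⟩ => by simp [← ha, dotProduct_comm, h]⟩

lemma finrank_dotOrth (K : Submodule F (Fin n → F)) :
    Module.finrank F (dotOrth K) = n - Module.finrank F K := by
  have h := Subspace.finrank_add_finrank_dualAnnihilator_eq K
  rw [dotOrth, Submodule.comap_equiv_eq_map_symm, LinearEquiv.finrank_map_eq]
  simp only [Module.finrank_fin_fun] at h
  omega

variable [Fintype F]

lemma card_dotOrth (K : Submodule F (Fin n → F)) :
    #{y | y ∈ dotOrth K} = Fintype.card F ^ (n - Module.finrank F K) := by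
  rw [← finrank_dotOrth, ← Module.card_eq_pow_finrank, Fintype.card_subtype]

lemma card_mul_card_dotOrth_dotProduct_eq_zero {K : Submodule F (Fin n → F)} {v : Fin n → F}
    (hv : v ∉ K) :
    Fintype.card F * #{y | y ∈ dotOrth K ∧ v ⬝ᵥ y = 0} = #{y | y ∈ dotOrth K} := by
  have hrank : Module.finrank F ↥(K ⊔ F ∙ v) = Module.finrank F K + 1 := by
    have hv0 : v ≠ 0 := fun h => hv (h ▸ K.zero_mem)
    have h := Submodule.finrank_sup_add_finrank_inf_eq K (F ∙ v)
    rwa [((Submodule.disjoint_span_singleton' hv0).mpr hv).eq_bot, finrank_bot, add_zero,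
      finrank_span_singleton hv0] at h
  have hle := Submodule.finrank_le (K ⊔ F ∙ v)
  simp only [← mem_dotOrth_sup_span_singleton, card_dotOrth, hrank]
  simp only [Module.finrank_fin_fun] at hle
  rw [← pow_succ']
  congr 1
  omega

/-- `q·[t = 0] − 1` is the sum of the nontrivial additive characters of `F` at `t`. -/
lemma sum_dotOrth_card_mul_indicator_sub_one (K : Submodule F (Fin n → F)) (v : Fin n → F) :
    ∑ y with y ∈ dotOrth K, ((Fintype.card F : ℝ) * (if v ⬝ᵥ y = 0 then 1 else 0) - 1) =
      if v ∈ K then ((Fintype.card F : ℝ) - 1) * #{y | y ∈ dotOrth K} else 0 := by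
  split_ifs with hv
  · have h : ∀ y ∈ ({y | y ∈ dotOrth K} : Finset _),
        (Fintype.card F : ℝ) * (if v ⬝ᵥ y = 0 then 1 else 0) - 1 = Fintype.card F - 1 := by
      intro y hy
      rw [if_pos (mem_dotOrth.mp (mem_filter.mp hy).2 v hv), mul_one]
    rw [sum_congr rfl h, sum_const, nsmul_eq_mul, mul_comm]
  · rw [sum_sub_distrib, ← mul_sum, sum_boole, filter_filter, sum_const, nsmul_one, sub_eq_zero]
    exact_mod_cast card_mul_card_dotOrth_dotProduct_eq_zero hv

end DualCode

section LinearBias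

variable {F : Type*} [Field F] [Fintype F] {n m : ℕ} {E : Type*}

noncomputable def linearBias (P : (Fin n → F) × E → ℝ) (e : E) (y : Fin n → F) : ℝ :=
  Fintype.card F * collision (· ⬝ᵥ y) P e - (∑ a, P (a, e)) ^ 2

lemma linearBias_nonneg (P : (Fin n → F) × E → ℝ) (e : E) (y : Fin n → F) :
    0 ≤ linearBias P e y :=
  sub_nonneg.mpr (sq_sum_le_card_mul_collision _ P e)

lemma linearBias_zero (P : (Fin n → F) × E → ℝ) (e : E) :
    linearBias P e 0 = (Fintype.card F - 1) * (∑ a, P (a, e)) ^ 2 := by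
  simp only [linearBias, collision_eq, dotProduct_zero, if_true, sq, sum_mul_sum]
  ring

lemma linearBias_eq_sum (P : (Fin n → F) × E → ℝ) (e : E) (y : Fin n → F) :
    linearBias P e y = ∑ a, ∑ a', P (a, e) * P (a', e) *
      ((Fintype.card F : ℝ) * (if (a - a') ⬝ᵥ y = 0 then 1 else 0) - 1) := by
  rw [linearBias, collision_eq, sq, sum_mul_sum, mul_sum, ← sum_sub_distrib]
  refine sum_congr rfl fun a _ => ?_
  rw [mul_sum, ← sum_sub_distrib]
  refine sum_congr rfl fun a' _ => ?_
  rw [sub_dotProduct, sub_eq_zero]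
  split_ifs <;> ring

lemma sum_dotOrth_linearBias (K : Submodule F (Fin n → F)) (P : (Fin n → F) × E → ℝ) (e : E) :
    ∑ y with y ∈ dotOrth K, linearBias P e y =
      (Fintype.card F - 1) * #{y | y ∈ dotOrth K} *
        ∑ a, ∑ a', if a - a' ∈ K then P (a, e) * P (a', e) else 0 := by
  simp only [linearBias_eq_sum, mul_sum]
  rw [sum_comm]
  refine sum_congr rfl fun a _ => ?_
  rw [sum_comm]
  refine sum_congr rfl fun a' _ => ?_
  rw [← mul_sum, sum_dotOrth_card_mul_indicator_sub_one]
  split_ifs <;> ring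

lemma sum_linearBias (P : (Fin n → F) × E → ℝ) (e : E) :
    ∑ y, linearBias P e y =
      (Fintype.card F - 1) * Fintype.card F ^ n * ∑ a, P (a, e) ^ 2 := by
  have h := sum_dotOrth_linearBias ⊥ P e
  simp only [Submodule.mem_bot, sub_eq_zero, sum_ite_eq, mem_univ, if_true, ← sq,
    card_dotOrth, finrank_bot, Nat.sub_zero] at h
  rw [Nat.cast_pow] at h
  rw [← h]
  exact (sum_congr (filter_true_of_mem fun y _ => by simp [mem_dotOrth]) fun _ _ => rfl).symm

lemma card_dotOrth_ker {f : (Fin n → F) →ₗ[F] (Fin m → F)} (hf : Function.Surjective f) :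
    #{y | y ∈ dotOrth (LinearMap.ker f)} = Fintype.card F ^ m := by
  have h := LinearMap.finrank_range_add_finrank_ker f
  rw [LinearMap.range_eq_top.mpr hf, finrank_top, Module.finrank_fin_fun,
    Module.finrank_fin_fun] at h
  rw [card_dotOrth]
  congr 1
  omega

lemma sum_dotOrth_ker_linearBias {f : (Fin n → F) →ₗ[F] (Fin m → F)}
    (hf : Function.Surjective f) (P : (Fin n → F) × E → ℝ) (e : E) :
    ∑ y with y ∈ dotOrth (LinearMap.ker f), linearBias P e y =
      (Fintype.card F - 1) * Fintype.card F ^ m * collision f P e := by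
  simp only [sum_dotOrth_linearBias, card_dotOrth_ker hf, LinearMap.mem_ker, map_sub,
    sub_eq_zero, collision_eq, Nat.cast_pow]
  congr!

end LinearBias

lemma sum_filter_eq_add_sum_erase_zero {V : Type*} [Fintype V] [Zero V] [DecidableEq V]
    (p : V → Prop) [DecidablePred p] (h0 : p 0) (g : V → ℝ) :
    ∑ y with p y, g y = g 0 + ∑ y ∈ univ.erase 0, if p y then g y else 0 := by
  rw [sum_filter, ← add_sum_erase _ _ (mem_univ 0), if_pos h0]

section Hashing

variable {F : Type*} [Field F] [Fintype F] {n m : ℕ} {X : Type*} [Fintype X]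

def IsAlmostDualUniversal (w : X → ℝ) (f : X → (Fin n → F) →ₗ[F] (Fin m → F)) (ε : ℝ) :
    Prop :=
  ∀ y : Fin n → F, y ≠ 0 → prOf w (fun x => y ∈ dotOrth (LinearMap.ker (f x))) ≤
    ε * Fintype.card F ^ m / Fintype.card F ^ n

lemma IsAlmostDualUniversal.sum_mul_sum_le {w : X → ℝ}
    {f : X → (Fin n → F) →ₗ[F] (Fin m → F)} {ε : ℝ} (hf : IsAlmostDualUniversal w f ε)
    {g : (Fin n → F) → ℝ} (hg : ∀ y, 0 ≤ g y) :
    ∑ x, w x * ∑ y ∈ univ.erase 0, (if y ∈ dotOrth (LinearMap.ker (f x)) then g y else 0) ≤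
      ε * Fintype.card F ^ m / Fintype.card F ^ n * ∑ y ∈ univ.erase 0, g y := by
  simp_rw [mul_sum]
  rw [sum_comm]
  refine sum_le_sum fun y hy => ?_
  calc ∑ x, w x * (if y ∈ dotOrth (LinearMap.ker (f x)) then g y else 0)
      = prOf w (fun x => y ∈ dotOrth (LinearMap.ker (f x))) * g y := by
        rw [prOf, sum_mul]
        refine sum_congr rfl fun x _ => ?_
        split_ifs <;> ring
    _ ≤ _ := mul_le_mul_of_nonneg_right (hf y (ne_of_mem_erase hy)) (hg y)

theorem sum_mul_collision_le {w : X → ℝ} (hw1 : ∑ x, w x = 1)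
    {f : X → (Fin n → F) →ₗ[F] (Fin m → F)} (hf : ∀ x, Function.Surjective (f x))
    {ε : ℝ} (hε : 0 ≤ ε) (hdual : IsAlmostDualUniversal w f ε)
    {E : Type*} (P : (Fin n → F) × E → ℝ) (e : E) :
    ∑ x, w x * collision (f x) P e ≤
      (∑ a, P (a, e)) ^ 2 / Fintype.card F ^ m + ε * ∑ a, P (a, e) ^ 2 := by
  set q : ℝ := (Fintype.card F : ℝ)
  set s := ∑ a, P (a, e)
  set R : X → ℝ := fun x => ∑ y ∈ univ.erase 0,
    if y ∈ dotOrth (LinearMap.ker (f x)) then linearBias P e y else 0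
  have hq : 0 < q - 1 := sub_pos.mpr (by simp only [q]; exact_mod_cast Fintype.one_lt_card)
  have hker : ∀ x, (q - 1) * q ^ m * collision (f x) P e = (q - 1) * s ^ 2 + R x := fun x => by
    rw [← sum_dotOrth_ker_linearBias (hf x),
      sum_filter_eq_add_sum_erase_zero _ (dotOrth _).zero_mem, linearBias_zero]
  have htotal : ∑ y ∈ univ.erase 0, linearBias P e y =
      (q - 1) * q ^ n * ∑ a, P (a, e) ^ 2 - (q - 1) * s ^ 2 := by
    rw [← sum_linearBias, ← add_sum_erase _ _ (mem_univ 0), linearBias_zero]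
    ring
  have hscaled : (q - 1) * q ^ m * ∑ x, w x * collision (f x) P e ≤
      (q - 1) * q ^ m * (s ^ 2 / q ^ m + ε * ∑ a, P (a, e) ^ 2) := by
    calc (q - 1) * q ^ m * ∑ x, w x * collision (f x) P e
        = (q - 1) * s ^ 2 + ∑ x, w x * R x := by
          simp_rw [mul_sum, mul_left_comm _ (w _), hker, mul_add, sum_add_distrib, ← sum_mul,
            hw1]
          ring
      _ ≤ (q - 1) * s ^ 2 + ε * q ^ m / q ^ n * ∑ y ∈ univ.erase 0, linearBias P e y := by
          gcongr
          exact hdual.sum_mul_sum_le (linearBias_nonneg P e)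
      _ = (q - 1) * q ^ m * (s ^ 2 / q ^ m + ε * ∑ a, P (a, e) ^ 2) -
            ε * q ^ m / q ^ n * ((q - 1) * s ^ 2) := by
          have hq0 : q ≠ 0 := by positivity
          rw [htotal]
          field_simp
          ring
      _ ≤ _ := sub_le_self _ (by positivity)
  exact le_of_mul_le_mul_left hscaled (by positivity)

end Hashing

lemma sum_le_sqrt_mul_sqrt_of_sq_le_mul {ι : Type*} (s : Finset ι) {r f g : ι → ℝ}
    (hf : ∀ i ∈ s, 0 ≤ f i) (hg : ∀ i ∈ s, 0 ≤ g i) (h : ∀ i ∈ s, r i ^ 2 ≤ f i * g i) :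
    ∑ i ∈ s, r i ≤ Real.sqrt (∑ i ∈ s, f i) * Real.sqrt (∑ i ∈ s, g i) := by
  rw [← Real.sqrt_mul (sum_nonneg hf)]
  exact Real.le_sqrt_of_sq_le (sum_sq_le_sum_mul_sum_of_sq_le_mul s hf hg h)

lemma sum_mul_sqrt_le_sqrt_sum_mul {X : Type*} [Fintype X] {w G : X → ℝ}
    (hw0 : ∀ x, 0 ≤ w x) (hw1 : ∑ x, w x = 1) (hG : ∀ x, 0 ≤ G x) :
    ∑ x, w x * Real.sqrt (G x) ≤ Real.sqrt (∑ x, w x * G x) := by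
  simpa only [hw1, Real.sqrt_one, one_mul] using sum_le_sqrt_mul_sqrt_of_sq_le_mul univ
    (r := fun x => w x * Real.sqrt (G x)) (fun x _ => hw0 x)
    (fun x _ => mul_nonneg (hw0 x) (hG x))
    (fun x _ => by rw [mul_pow, Real.sq_sqrt (hG x), sq, mul_assoc])

lemma sum_sum_abs_le_sqrt_card_mul_sqrt {B E : Type*} [Fintype B] [Fintype E] {Q : E → ℝ}
    (hQ0 : ∀ e, 0 < Q e) (hQ1 : ∑ e, Q e = 1) (D : B → E → ℝ) :
    ∑ b, ∑ e, |D b e| ≤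
      Real.sqrt (Fintype.card B) * Real.sqrt (∑ b, ∑ e, D b e ^ 2 * (Q e)⁻¹) := by
  have h := sum_le_sqrt_mul_sqrt_of_sq_le_mul (univ : Finset (B × E))
    (r := fun z => |D z.1 z.2|) (f := fun z => Q z.2) (g := fun z => D z.1 z.2 ^ 2 * (Q z.2)⁻¹)
    (fun z _ => (hQ0 z.2).le) (fun z _ => mul_nonneg (sq_nonneg _) (inv_pos.mpr (hQ0 z.2)).le)
    (fun z _ => by rw [sq_abs, mul_left_comm, mul_inv_cancel₀ (hQ0 z.2).ne', mul_one])
  simpa only [Fintype.sum_prod_type, hQ1, sum_const, card_univ, nsmul_one] using h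

lemma mul_log_mul_le {u r c : ℝ} (hu : 0 ≤ u) (hr : 0 < r) (hc : 0 < c) :
    u * Real.log (r * u) ≤ u * (Real.log c - 1) + r * u ^ 2 / c := by
  rcases hu.eq_or_lt with rfl | hu
  · simp
  have h := Real.log_le_sub_one_of_pos (show 0 < r * u / c by positivity)
  rw [Real.log_div (by positivity) hc.ne'] at h
  calc u * Real.log (r * u) ≤ u * (Real.log c + (r * u / c - 1)) := by gcongr; linarith
    _ = u * (Real.log c - 1) + r * u ^ 2 / c := by ring

section Consequences

variable {A B E X : Type*} [Fintype A] [Fintype B]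

lemma sum_push_mul_log_le (f : A → B) {P : A × E → ℝ} (hP0 : ∀ z, 0 ≤ P z) {e : E}
    (he : 0 < ∑ a, P (a, e)) {k c : ℝ} (hk : 0 < k) (hc : 0 < c) :
    ∑ b, push f P b e * Real.log (k * push f P b e / ∑ a, P (a, e)) ≤
      (Real.log c - 1) * ∑ a, P (a, e) + k / c * (∑ a, P (a, e))⁻¹ * collision f P e := by
  calc ∑ b, push f P b e * Real.log (k * push f P b e / ∑ a, P (a, e))
      ≤ ∑ b, (push f P b e * (Real.log c - 1) +
          k / (∑ a, P (a, e)) * push f P b e ^ 2 / c) := by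
        gcongr with b
        rw [mul_div_right_comm]
        exact mul_log_mul_le (push_nonneg f hP0 b e) (div_pos hk he) hc
    _ = _ := by
        rw [sum_add_distrib, ← sum_mul, sum_push, collision, mul_sum _ _ (k / c * _), mul_comm]
        exact congrArg _ (sum_congr rfl fun b _ => by ring)

variable [Fintype X]

theorem sum_mul_sum_sq_push_sub_mean_le {w : X → ℝ} (hw1 : ∑ x, w x = 1) {f : X → A → B}
    {P : A × E → ℝ} {ε : ℝ}
    (hcoll : ∀ e, ∑ x, w x * collision (f x) P e ≤
      (∑ a, P (a, e)) ^ 2 / Fintype.card B + ε * ∑ a, P (a, e) ^ 2) (e : E) :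
    ∑ x, w x * ∑ b, (push (f x) P b e - (∑ a, P (a, e)) / Fintype.card B) ^ 2 ≤
      ε * ∑ a, P (a, e) ^ 2 := by
  simp_rw [sum_sq_push_sub_mean, mul_sub, sum_sub_distrib, ← sum_mul, hw1, one_mul]
  linarith [hcoll e]

variable [Fintype E]

theorem sum_mul_sum_abs_push_sub_mean_le {w : X → ℝ} (hw0 : ∀ x, 0 ≤ w x)
    (hw1 : ∑ x, w x = 1) {f : X → A → B} {P : A × E → ℝ} {Q : E → ℝ}
    (hQ0 : ∀ e, 0 < Q e) (hQ1 : ∑ e, Q e = 1) {ε : ℝ} (hε : 0 ≤ ε)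
    (hcoll : ∀ e, ∑ x, w x * collision (f x) P e ≤
      (∑ a, P (a, e)) ^ 2 / Fintype.card B + ε * ∑ a, P (a, e) ^ 2) :
    ∑ x, w x * ∑ b, ∑ e, |push (f x) P b e - (∑ a, P (a, e)) / Fintype.card B| ≤
      Real.sqrt ε * Real.sqrt (Fintype.card B) *
        Real.sqrt (∑ a, ∑ e, P (a, e) ^ 2 * (Q e)⁻¹) := by
  set D : X → B → E → ℝ := fun x b e =>
    push (f x) P b e - (∑ a, P (a, e)) / Fintype.card B
  set G : X → ℝ := fun x => ∑ b, ∑ e, D x b e ^ 2 * (Q e)⁻¹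
  have hG : ∀ x, 0 ≤ G x := fun x => sum_nonneg fun b _ => sum_nonneg fun e _ =>
    mul_nonneg (sq_nonneg _) (inv_pos.mpr (hQ0 e)).le
  have hAvg : ∑ x, w x * G x ≤ ε * ∑ a, ∑ e, P (a, e) ^ 2 * (Q e)⁻¹ := by
    calc ∑ x, w x * G x = ∑ e, (Q e)⁻¹ * ∑ x, w x * ∑ b, D x b e ^ 2 := by
          simp only [G, mul_sum]
          conv_rhs => rw [sum_comm]
          refine sum_congr rfl fun x _ => ?_
          rw [sum_comm]
          exact sum_congr rfl fun _ _ => sum_congr rfl fun _ _ => by ring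
      _ ≤ ∑ e, (Q e)⁻¹ * (ε * ∑ a, P (a, e) ^ 2) := by
          gcongr with e
          · exact (inv_pos.mpr (hQ0 e)).le
          · exact sum_mul_sum_sq_push_sub_mean_le hw1 hcoll e
      _ = ε * ∑ a, ∑ e, P (a, e) ^ 2 * (Q e)⁻¹ := by
          simp only [mul_sum]
          rw [sum_comm]
          exact sum_congr rfl fun _ _ => sum_congr rfl fun _ _ => by ring
  calc ∑ x, w x * ∑ b, ∑ e, |D x b e|
      ≤ ∑ x, w x * (Real.sqrt (Fintype.card B) * Real.sqrt (G x)) := by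
        gcongr with x
        · exact hw0 x
        · exact sum_sum_abs_le_sqrt_card_mul_sqrt hQ0 hQ1 (D x)
    _ = Real.sqrt (Fintype.card B) * ∑ x, w x * Real.sqrt (G x) := by
        rw [mul_sum]
        exact sum_congr rfl fun x _ => by ring
    _ ≤ Real.sqrt (Fintype.card B) * Real.sqrt (ε * ∑ a, ∑ e, P (a, e) ^ 2 * (Q e)⁻¹) := by
        gcongr
        exact (sum_mul_sqrt_le_sqrt_sum_mul hw0 hw1 hG).trans (Real.sqrt_le_sqrt hAvg)
    _ = _ := by rw [Real.sqrt_mul hε]; ring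

theorem sum_mul_sum_push_mul_log_le [Nonempty B] {w : X → ℝ} (hw0 : ∀ x, 0 ≤ w x)
    (hw1 : ∑ x, w x = 1) {f : X → A → B} {P : A × E → ℝ} (hP0 : ∀ z, 0 ≤ P z)
    (hP1 : ∑ z, P z = 1) (hPE : ∀ e, 0 < ∑ a, P (a, e)) {ε : ℝ} (hε : 0 ≤ ε)
    (hcoll : ∀ e, ∑ x, w x * collision (f x) P e ≤
      (∑ a, P (a, e)) ^ 2 / Fintype.card B + ε * ∑ a, P (a, e) ^ 2) :
    ∑ x, w x * ∑ b, ∑ e, push (f x) P b e *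
        Real.log (Fintype.card B * push (f x) P b e / ∑ a, P (a, e)) ≤
      Real.log (1 + ε * Fintype.card B * ∑ a, ∑ e, P (a, e) ^ 2 * (∑ a', P (a', e))⁻¹) := by
  set k : ℝ := (Fintype.card B : ℝ)
  set p : E → ℝ := fun e => ∑ a, P (a, e)
  set H := ∑ a, ∑ e, P (a, e) ^ 2 * (p e)⁻¹
  set c := 1 + ε * k * H
  have hk : 0 < k := by simp only [k]; exact_mod_cast Fintype.card_pos
  have hH : 0 ≤ H := sum_nonneg fun a _ => sum_nonneg fun e _ =>
    mul_nonneg (sq_nonneg _) (inv_pos.mpr (hPE e)).le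
  have hc : 0 < c := by positivity
  have hp1 : ∑ e, p e = 1 := by rw [← hP1, Fintype.sum_prod_type, sum_comm]
  -- `c` is the tangent point of `log` in `mul_log_mul_le`, chosen so that the bound collapses
  -- to `log c`.
  calc ∑ x, w x * ∑ b, ∑ e, push (f x) P b e * Real.log (k * push (f x) P b e / p e)
      ≤ ∑ x, w x * ∑ e,
          ((Real.log c - 1) * p e + k / c * (p e)⁻¹ * collision (f x) P e) := by
        gcongr with x
        · exact hw0 x
        · rw [sum_comm]
          exact sum_le_sum fun e _ => sum_push_mul_log_le (f x) hP0 (hPE e) hk hc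
    _ = ∑ e, ((Real.log c - 1) * p e +
          k / c * (p e)⁻¹ * ∑ x, w x * collision (f x) P e) := by
        refine (sum_congr rfl fun x _ => mul_sum _ _ _).trans
          (sum_comm.trans (sum_congr rfl fun e _ => ?_))
        simp only [mul_add, sum_add_distrib, ← sum_mul, hw1, one_mul, mul_left_comm (w _),
          ← mul_sum]
    _ ≤ ∑ e, ((Real.log c - 1) * p e +
          k / c * (p e)⁻¹ * (p e ^ 2 / k + ε * ∑ a, P (a, e) ^ 2)) := by
        gcongr with e
        · exact (mul_pos (div_pos hk hc) (inv_pos.mpr (hPE e))).le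
        · exact hcoll e
    _ = ∑ e, ((Real.log c - 1 + c⁻¹) * p e + ε * k / c * ∑ a, P (a, e) ^ 2 * (p e)⁻¹) := by
        refine sum_congr rfl fun e _ => ?_
        have := (hPE e).ne'
        rw [← sum_mul]
        field_simp
        ring
    _ = Real.log c := by
        rw [sum_add_distrib, ← mul_sum, hp1, ← mul_sum, sum_comm,
          show ∑ a, ∑ e, P (a, e) ^ 2 * (p e)⁻¹ = H from rfl]
        field_simp
        simp only [c]
        ring

end Consequences

theorem stmt_12_general {F : Type*} [Field F] [Fintype F] (n m : ℕ)
    {E : Type*} [Fintype E]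
    (P : (Fin n → F) × E → ℝ) (hP0 : ∀ x, 0 ≤ P x)
    (Q : E → ℝ) (hQ0 : ∀ e, 0 < Q e) (hQ1 : ∑ e, Q e = 1)
    {X : Type*} [Fintype X] (w : X → ℝ)
    (hw0 : ∀ x, 0 ≤ w x) (hw1 : ∑ x, w x = 1)
    (f : X → ((Fin n → F) →ₗ[F] (Fin m → F))) (hfsurj : ∀ x, Function.Surjective (f x))
    (ε : ℝ) (hε : 0 ≤ ε)
    (hdu : ∀ y : Fin n → F, y ≠ 0 →
      prOf w (fun x => ∀ v : Fin n → F, f x v = 0 → ∑ i, v i * y i = 0) ≤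
        ε * (Fintype.card F : ℝ) ^ m / (Fintype.card F : ℝ) ^ n) :
    (∑ x, w x *
        ∑ b : Fin m → F, ∑ e : E,
          |push (f x) P b e - (∑ a, P (a, e)) / (Fintype.card F : ℝ) ^ m| ≤
      Real.sqrt ε * Real.sqrt ((Fintype.card F : ℝ) ^ m) *
        Real.sqrt (∑ a : Fin n → F, ∑ e : E, P (a, e) ^ 2 * (Q e)⁻¹)) ∧
    ((∑ x, P x) = 1 → (∀ e : E, 0 < ∑ a, P (a, e)) →
      (∑ x, w x *
          ∑ b : Fin m → F, ∑ e : E, push (f x) P b e *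
            Real.log ((Fintype.card F : ℝ) ^ m * push (f x) P b e / (∑ a, P (a, e))) ≤
        Real.log (1 + ε * (Fintype.card F : ℝ) ^ m *
          ∑ a : Fin n → F, ∑ e : E, P (a, e) ^ 2 * (∑ a', P (a', e))⁻¹)) ∧
      (Real.log (1 + ε * (Fintype.card F : ℝ) ^ m *
          ∑ a : Fin n → F, ∑ e : E, P (a, e) ^ 2 * (∑ a', P (a', e))⁻¹) ≤
        ε * (Fintype.card F : ℝ) ^ m *
          ∑ a : Fin n → F, ∑ e : E, P (a, e) ^ 2 * (∑ a', P (a', e))⁻¹)) := by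
  have hdual : IsAlmostDualUniversal w f ε := fun y hy => by
    convert hdu y hy using 3
    simp only [mem_dotOrth, LinearMap.mem_ker, dotProduct]
  have hcard : (Fintype.card (Fin m → F) : ℝ) = (Fintype.card F : ℝ) ^ m := by simp
  have hcoll : ∀ e, ∑ x, w x * collision (f x) P e ≤
      (∑ a, P (a, e)) ^ 2 / Fintype.card (Fin m → F) + ε * ∑ a, P (a, e) ^ 2 := fun e => by
    rw [hcard]
    exact sum_mul_collision_le hw1 hfsurj hε hdual P e
  have hH : 0 ≤ ∑ a : Fin n → F, ∑ e : E, P (a, e) ^ 2 * (∑ a', P (a', e))⁻¹ :=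
    sum_nonneg fun a _ => sum_nonneg fun e _ =>
      mul_nonneg (sq_nonneg _) (inv_nonneg.mpr (sum_nonneg fun a' _ => hP0 _))
  rw [← hcard]
  refine ⟨sum_mul_sum_abs_push_sub_mean_le hw0 hw1 hQ0 hQ1 hε hcoll, fun hP1 hPE =>
    ⟨sum_mul_sum_push_mul_log_le hw0 hw1 hP0 hP1 hPE hε hcoll, ?_⟩⟩
  linarith [Real.log_le_sub_one_of_pos (show 0 < 1 + ε * Fintype.card (Fin m → F) *
    ∑ a : Fin n → F, ∑ e : E, P (a, e) ^ 2 * (∑ a', P (a', e))⁻¹ by positivity)]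

theorem stmt_12 {F : Type*} [Field F] [Fintype F] (n m : ℕ) (hm : 1 ≤ m) (hnm : m ≤ n)
    {E : Type*} [Fintype E] [Nonempty E]
    (P : (Fin n → F) × E → ℝ) (hP0 : ∀ x, 0 ≤ P x) (hP1 : ∑ x, P x ≤ 1)
    (Q : E → ℝ) (hQ0 : ∀ e, 0 < Q e) (hQ1 : ∑ e, Q e = 1)
    {X : Type*} [Fintype X] [Nonempty X] (w : X → ℝ)
    (hw0 : ∀ x, 0 ≤ w x) (hw1 : ∑ x, w x = 1)
    (f : X → ((Fin n → F) →ₗ[F] (Fin m → F))) (hfsurj : ∀ x, Function.Surjective (f x))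
    (ε : ℝ) (hε : 0 ≤ ε)
    (hdu : ∀ y : Fin n → F, y ≠ 0 →
      prOf w (fun x => ∀ v : Fin n → F, f x v = 0 → ∑ i, v i * y i = 0) ≤
        ε * (Fintype.card F : ℝ) ^ m / (Fintype.card F : ℝ) ^ n) :
    (∑ x, w x *
        ∑ b : Fin m → F, ∑ e : E,
          |push (f x) P b e - (∑ a, P (a, e)) / (Fintype.card F : ℝ) ^ m| ≤
      Real.sqrt ε * Real.sqrt ((Fintype.card F : ℝ) ^ m) *
        Real.sqrt (∑ a : Fin n → F, ∑ e : E, P (a, e) ^ 2 * (Q e)⁻¹)) ∧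
    ((∑ x, P x) = 1 → (∀ e : E, 0 < ∑ a, P (a, e)) →
      (∑ x, w x *
          ∑ b : Fin m → F, ∑ e : E, push (f x) P b e *
            Real.log ((Fintype.card F : ℝ) ^ m * push (f x) P b e / (∑ a, P (a, e))) ≤
        Real.log (1 + ε * (Fintype.card F : ℝ) ^ m *
          ∑ a : Fin n → F, ∑ e : E, P (a, e) ^ 2 * (∑ a', P (a', e))⁻¹)) ∧
      (Real.log (1 + ε * (Fintype.card F : ℝ) ^ m *
          ∑ a : Fin n → F, ∑ e : E, P (a, e) ^ 2 * (∑ a', P (a', e))⁻¹) ≤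
        ε * (Fintype.card F : ℝ) ^ m *
          ∑ a : Fin n → F, ∑ e : E, P (a, e) ^ 2 * (∑ a', P (a', e))⁻¹)) :=
  stmt_12_general n m P hP0 Q hQ0 hQ1 w hw0 hw1 f hfsurj ε hε hdu
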